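/- For every interval graph G, ν(G_α) ≤ ν(G_β) + 1. -/

import Mathlib

open Set

/-- An interval representation of a simple graph `G`: each vertex `v` gets a nonempty
closed interval `[l v, r v] ⊆ ℝ`, and two distinct vertices are adjacent iff their
intervals intersect. -/
structure IntervalRep {V : Type*} (G : SimpleGraph V) where
  l : V → ℝ
  r : V → ℝ
  le : ∀ v, l v ≤ r v
  adj_iff : ∀ u v : V, u ≠ v →
    (G.Adj u v ↔ (Icc (l u) (r u) ∩ Icc (l v) (r v)).Nonempty)

namespace IntervalRep

variable {V : Type*} {G : SimpleGraph V}

/-- The interval of a vertex. -/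
def itv (R : IntervalRep G) (v : V) : Set ℝ := Icc (R.l v) (R.r v)

/-- The nesting `ν(R)`: the maximum length of a chain of strictly nested vertex intervals. -/
noncomputable def nesting (R : IntervalRep G) : ℕ :=
  sSup {k : ℕ | ∃ f : Fin k → V, ∀ i j : Fin k, i < j → R.itv (f i) ⊂ R.itv (f j)}

/-- `ν_R(x)`: the maximum length of a chain of strictly nested vertex intervals whose
outermost interval is `I(x)` (counting `x` itself). -/
noncomputable def nuAt (R : IntervalRep G) (x : V) : ℕ :=
  sSup {k : ℕ | ∃ f : Fin k → V,
    (∀ i j : Fin k, i < j → R.itv (f i) ⊂ R.itv (f j)) ∧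
    ∃ h : 0 < k, f ⟨k - 1, by omega⟩ = x}

end IntervalRep

/-- A graph is an interval graph if it admits an interval representation. -/
def IsIntervalGraph {V : Type*} (G : SimpleGraph V) : Prop := Nonempty (IntervalRep G)

/-- The nesting number `ν(G)`: the minimum nesting over all interval representations. -/
noncomputable def nu {V : Type*} (G : SimpleGraph V) : ℕ :=
  sInf {n : ℕ | ∃ R : IntervalRep G, R.nesting = n}

/-- `G_α`: add vertices `u, a₁, a₂, b₁, b₂` (coded as `0,1,2,3,4`), with `u` adjacent to all
of `G` and to `a₁, b₁`; `a₁ ~ a₂` and `b₁ ~ b₂`. -/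
def Galpha {V : Type*} (G : SimpleGraph V) : SimpleGraph (V ⊕ Fin 5) :=
  SimpleGraph.fromRel fun x y =>
    match x, y with
    | Sum.inl a, Sum.inl b => G.Adj a b
    | Sum.inl _, Sum.inr i => i = 0
    | Sum.inr _, Sum.inl _ => False
    | Sum.inr i, Sum.inr j =>
        i = 0 ∧ j = 1 ∨ i = 1 ∧ j = 2 ∨ i = 0 ∧ j = 3 ∨ i = 3 ∧ j = 4

/-- `G_β`: add vertices `u, a₁, a₂` (coded as `0,1,2`), with `u` adjacent to all of `G`
and to `a₁`; `a₁ ~ a₂`. -/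
def Gbeta {V : Type*} (G : SimpleGraph V) : SimpleGraph (V ⊕ Fin 3) :=
  SimpleGraph.fromRel fun x y =>
    match x, y with
    | Sum.inl a, Sum.inl b => G.Adj a b
    | Sum.inl _, Sum.inr i => i = 0
    | Sum.inr _, Sum.inl _ => False
    | Sum.inr i, Sum.inr j => i = 0 ∧ j = 1 ∨ i = 1 ∧ j = 2

/-- `G_γ`: add vertices `u, v, a₁, a₂, b₁, b₂` (coded as `0,1,2,3,4,5`), with `u ~ v`, both
adjacent to all of `G`; `u ~ a₁`, `a₁ ~ a₂`, `v ~ b₁`, `b₁ ~ b₂`. -/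
def Ggamma {V : Type*} (G : SimpleGraph V) : SimpleGraph (V ⊕ Fin 6) :=
  SimpleGraph.fromRel fun x y =>
    match x, y with
    | Sum.inl a, Sum.inl b => G.Adj a b
    | Sum.inl _, Sum.inr i => i = 0 ∨ i = 1
    | Sum.inr _, Sum.inl _ => False
    | Sum.inr i, Sum.inr j =>
        i = 0 ∧ j = 1 ∨ i = 0 ∧ j = 2 ∨ i = 2 ∧ j = 3 ∨ i = 1 ∧ j = 4 ∨ i = 4 ∧ j = 5

/-- The disjoint union of a family of graphs, on the sigma type of their vertex sets. -/
def sigmaGraph {p : ℕ} {V : Fin p → Type*} (G : ∀ i, SimpleGraph (V i)) :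
    SimpleGraph (Σ i, V i) :=
  SimpleGraph.fromRel fun x y => ∃ h : x.1 = y.1, (G y.1).Adj (h ▸ x.2) y.2

/-- The graph obtained from `H` by adding one new vertex adjacent to every vertex of `H`. -/
def joinVertex {W : Type*} (H : SimpleGraph W) : SimpleGraph (W ⊕ Unit) :=
  SimpleGraph.fromRel fun x y =>
    match x, y with
    | Sum.inl a, Sum.inl b => H.Adj a b
    | Sum.inl _, Sum.inr _ => True
    | _, _ => False


/-!
An optimal representation of `G_β` restricts to a representation of `G`, so `ν(G) ≤ ν(G_β)`.
Conversely, squeeze any representation of `G` into `(-c, c)` and add `I(u) = [-c, c]`,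
`I(a₁) = [-2c, -c]`, `I(a₂) = [-3c, -2c]`, `I(b₁) = [c, 2c]`, `I(b₂) = [2c, 3c]`. Each of these
five intervals sticks out of every other interval, so it can only be the outermost member of a
nested chain; hence `ν(G_α) ≤ ν(G) + 1`.
-/

open Sum

namespace IntervalRep

variable {V W : Type*} {G : SimpleGraph V} {H : SimpleGraph W}

lemma nesting_le (R : IntervalRep G) {n : ℕ}
    (h : ∀ k (f : Fin k → V), StrictMono (R.itv ∘ f) → k ≤ n) : R.nesting ≤ n :=
  csSup_le ⟨0, Fin.elim0, fun i => i.elim0⟩ fun k ⟨f, hf⟩ => h k f fun _ _ => hf _ _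

lemma le_nesting [Finite V] (R : IntervalRep G) {k : ℕ} (f : Fin k → V)
    (hf : StrictMono (R.itv ∘ f)) : k ≤ R.nesting := by
  refine le_csSup ⟨Nat.card V, ?_⟩ ⟨f, fun _ _ h => hf h⟩
  rintro n ⟨g, hg⟩
  have hg' : StrictMono (R.itv ∘ g) := fun _ _ h => hg _ _ h
  simpa using Nat.card_le_card_of_injective g hg'.injective.of_comp

def comap (f : G ↪g H) (R : IntervalRep H) : IntervalRep G where
  l := R.l ∘ f
  r := R.r ∘ f
  le v := R.le (f v)
  adj_iff _ _ huv := f.map_adj_iff.symm.trans (R.adj_iff _ _ (f.injective.ne huv))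

lemma nesting_comap_le [Finite W] (f : G ↪g H) (R : IntervalRep H) :
    (R.comap f).nesting ≤ R.nesting :=
  nesting_le _ fun _ g hg => R.le_nesting (f ∘ g) hg

/-- Every interval of a chain but the outermost is strictly contained in the next one, so only
the outermost can lie outside the image of `f`. -/
lemma nesting_le_nesting_comap_add_one [Finite V] (f : G ↪g H) (R : IntervalRep H)
    (hmax : ∀ w ∉ range f, ∀ y, ¬ R.itv w ⊂ R.itv y) :
    R.nesting ≤ (R.comap f).nesting + 1 := by
  refine R.nesting_le fun k g hg => ?_
  have hmem (i : Fin (k - 1)) : ∃ v, f v = g (Fin.castLE (k.sub_le 1) i) := by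
    by_contra! h
    exact hmax _ (by simpa [eq_comm] using h) (g ⟨i + 1, by omega⟩)
      (hg (show Fin.castLE _ i < ⟨i + 1, _⟩ from Fin.lt_def.2 (by simp)))
  choose v hv using hmem
  have hlen := (R.comap f).le_nesting v fun i j hij => by
    simpa [comap, itv, hv] using hg (Fin.strictMono_castLE _ hij)
  omega

lemma exists_pos_bound [Finite V] (R : IntervalRep G) :
    ∃ c > 0, ∀ v, -c < R.l v ∧ R.r v < c := by
  obtain ⟨M, hM⟩ := Finite.exists_le fun v => |R.l v| + |R.r v|
  refine ⟨max M 0 + 1, by positivity, fun v => ⟨?_, ?_⟩⟩ <;>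
    linarith [hM v, le_max_left M 0, neg_abs_le (R.l v), le_abs_self (R.r v),
      abs_nonneg (R.l v), abs_nonneg (R.r v)]

end IntervalRep

lemma IsIntervalGraph.comap {V W : Type*} {G : SimpleGraph V} {H : SimpleGraph W}
    (f : G ↪g H) (hH : IsIntervalGraph H) : IsIntervalGraph G :=
  hH.map (IntervalRep.comap f)

lemma nu_le_nesting {V : Type*} {G : SimpleGraph V} (R : IntervalRep G) : nu G ≤ R.nesting :=
  Nat.sInf_le ⟨R, rfl⟩

lemma IsIntervalGraph.exists_nesting_eq_nu {V : Type*} {G : SimpleGraph V}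
    (hG : IsIntervalGraph G) : ∃ R : IntervalRep G, R.nesting = nu G := by
  obtain ⟨R⟩ := hG
  exact Nat.sInf_mem (⟨R.nesting, R, rfl⟩ : {n | ∃ R : IntervalRep G, R.nesting = n}.Nonempty)

section Gadgets

open IntervalRep

variable {V : Type*} {G : SimpleGraph V}

def Gbeta.inl : G ↪g Gbeta G where
  toFun := Sum.inl
  inj' := Sum.inl_injective
  map_rel_iff' := by
    simp only [Gbeta, SimpleGraph.fromRel_adj, Function.Embedding.coeFn_mk, ne_eq, inl.injEq,
      G.adj_comm, or_self, and_iff_right_iff_imp]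
    exact fun h => h.ne

def Gbeta.toGalpha : Gbeta G ↪g Galpha G where
  toFun := Sum.map id (Fin.castLE (by norm_num))
  inj' := Sum.map_injective.2 ⟨Function.injective_id, Fin.castLE_injective _⟩
  map_rel_iff' {x y} := by
    have castLE_eq_zero (i : Fin 3) : Fin.castLE (by norm_num : 3 ≤ 5) i = 0 ↔ i = 0 :=
      (Fin.castLE_injective _).eq_iff' rfl
    rcases x with a | i <;> rcases y with b | j
    · simp only [Gbeta, Galpha, SimpleGraph.fromRel_adj, Function.Embedding.coeFn_mk, map_inl,
        id_eq, ne_eq, inl.injEq, G.adj_comm, or_self]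
    · simp [Gbeta, Galpha, castLE_eq_zero]
    · simp [Gbeta, Galpha, castLE_eq_zero]
    · simp only [Galpha, Gbeta, SimpleGraph.fromRel_adj, Function.Embedding.coeFn_mk, map_inr,
        ne_eq, inr.injEq]
      revert i j
      decide

def Galpha.inl : G ↪g Galpha G := Gbeta.inl.trans Gbeta.toGalpha

def alphaRep (R : IntervalRep G) (c : ℝ) (hc : 0 < c) (hR : ∀ v, -c < R.l v ∧ R.r v < c) :
    IntervalRep (Galpha G) where
  l := Sum.elim R.l ![-c, -2 * c, -3 * c, c, 2 * c]
  r := Sum.elim R.r ![c, -c, -2 * c, 2 * c, 3 * c]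
  le := by
    rintro (v | j)
    · exact R.le v
    · fin_cases j <;> simp <;> linarith
  adj_iff := by
    have inl_inr (v : V) (j : Fin 5) : (Galpha G).Adj (inl v) (inr j) ↔
        (Icc (R.l v) (R.r v) ∩
          Icc (![-c, -2 * c, -3 * c, c, 2 * c] j) (![c, -c, -2 * c, 2 * c, 3 * c] j)).Nonempty := by
      have := hR v
      have := R.le v
      rw [Icc_inter_Icc, nonempty_Icc, max_le_iff, le_min_iff, le_min_iff]
      fin_cases j <;> simp [Galpha] <;> grind
    rintro (v | i) (w | j) hne
    · exact Galpha.inl.map_adj_iff.trans (R.adj_iff v w (by simpa using hne))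
    · exact inl_inr v j
    · rw [SimpleGraph.adj_comm, inter_comm]
      exact inl_inr w i
    · rw [Icc_inter_Icc, nonempty_Icc, max_le_iff, le_min_iff, le_min_iff]
      fin_cases i <;> fin_cases j <;> simp [Galpha] at hne ⊢ <;> grind

variable (R : IntervalRep G) (c : ℝ) (hc : 0 < c) (hR : ∀ v, -c < R.l v ∧ R.r v < c)

lemma alphaRep_comap_inl : (alphaRep R c hc hR).comap Galpha.inl = R :=
  rfl

lemma not_alphaRep_itv_inr_ssubset (j : Fin 5) (y : V ⊕ Fin 5) :
    ¬ (alphaRep R c hc hR).itv (inr j) ⊂ (alphaRep R c hc hR).itv y := by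
  intro h
  have hsub := (Icc_subset_Icc_iff ((alphaRep R c hc hR).le (inr j))).1 h.subset
  rcases y with w | i
  · have := hR w
    fin_cases j <;> simp [alphaRep] at hsub <;> linarith
  · fin_cases j <;> fin_cases i <;> first | exact h.ne rfl | (simp [alphaRep] at hsub; linarith)

lemma nesting_alphaRep_le [Finite V] : (alphaRep R c hc hR).nesting ≤ R.nesting + 1 := by
  rw [← congrArg nesting (alphaRep_comap_inl R c hc hR)]
  refine nesting_le_nesting_comap_add_one _ _ ?_
  rintro (v | j) hj y
  · exact absurd ⟨v, rfl⟩ hj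
  · exact not_alphaRep_itv_inr_ssubset R c hc hR j y

end Gadgets

lemma nu_galpha_le {V : Type*} [Finite V] {G : SimpleGraph V} (R : IntervalRep G) :
    nu (Galpha G) ≤ R.nesting + 1 := by
  obtain ⟨c, hc, hR⟩ := R.exists_pos_bound
  exact (nu_le_nesting _).trans (nesting_alphaRep_le R c hc hR)

lemma IsIntervalGraph.galpha {V : Type*} [Finite V] {G : SimpleGraph V}
    (hG : IsIntervalGraph G) : IsIntervalGraph (Galpha G) := by
  obtain ⟨R⟩ := hG
  obtain ⟨c, hc, hR⟩ := R.exists_pos_bound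
  exact ⟨alphaRep R c hc hR⟩

/-- `ν(G_α) ≤ ν(G_β) + 1`. -/
theorem stmt_5 {V : Type*} [Fintype V] (G : SimpleGraph V) (hG : IsIntervalGraph G) :
    nu (Galpha G) ≤ nu (Gbeta G) + 1 := by
  obtain ⟨R, hR⟩ := (hG.galpha.comap Gbeta.toGalpha).exists_nesting_eq_nu
  calc nu (Galpha G) ≤ (R.comap Gbeta.inl).nesting + 1 := nu_galpha_le _
    _ ≤ R.nesting + 1 := Nat.add_le_add_right (R.nesting_comap_le _) 1
    _ = nu (Gbeta G) + 1 := by rw [hR]
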